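/- arXiv:2207.12953 — 7 statements merged into one kernel-verified Lean document; each statement's English description precedes it below -/
import Mathlib

section
/- Let S be a set and f : Set S → Set S be monotone (with respect to ⊆). If (X, ≺) is a support ordering for f (i.e. X ⊆ S, ≺ ⊆ X × X, and for every x ∈ X, x ∈ f({x' ∈ X | x' ≺ x})) and ≺ is well-founded, then X is contained in the least fixpoint of f. -/
/-- `(X, r)` is a support ordering for `f`: every `x ∈ X` lies in
`f` applied to the set of its `r`-predecessors within `X`. -/
def IsSupportOrdering {S : Type*} (f : Set S → Set S) (X : Set S) (r : S → S → Prop) : Prop :=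
  ∀ x ∈ X, x ∈ f {x' ∈ X | r x' x}

theorem IsSupportOrdering.subset_of_map_subset {S : Type*} {f : Set S → Set S} {X : Set S}
    {r : S → S → Prop} (hsupp : IsSupportOrdering f X r) (hf : Monotone f)
    (hwf : WellFounded r) {Y : Set S} (hY : f Y ⊆ Y) : X ⊆ Y := by
  intro x
  induction x using hwf.induction with
  | _ x ih =>
    intro hx
    have hpre : {x' ∈ X | r x' x} ⊆ Y := fun z hz => ih z hz.2 hz.1
    exact hY (hf hpre (hsupp x hx))

theorem well_supported_subset_lfp_general {S : Type*} (f : Set S → Set S) (hf : Monotone f)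
    (X : Set S) (r : S → S → Prop)
    (hsupp : IsSupportOrdering f X r)
    (hwf : WellFounded r) :
    X ⊆ sInf {Y : Set S | f Y ⊆ Y} :=
  le_sInf fun _ hY => hsupp.subset_of_map_subset hf hwf hY

theorem well_supported_subset_lfp {S : Type*} (f : Set S → Set S) (hf : Monotone f)
    (X : Set S) (r : S → S → Prop)
    (hrX : ∀ x y, r x y → x ∈ X ∧ y ∈ X)
    (hsupp : IsSupportOrdering f X r)
    (hwf : WellFounded r) :
    X ⊆ sInf {Y : Set S | f Y ⊆ Y} :=
  well_supported_subset_lfp_general f hf X r hsupp hwf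
end

section
/- Let S be a set and f : Set S → Set S be monotone. Then the greatest fixpoint of f equals the union of all subsets X ⊆ S that are supported for f, i.e. νf = ⋃{X ⊆ S | ∃ ≺, (X, ≺) is a support ordering for f}. -/
section SupportOrdering

variable {S : Type*} {f : Set S → Set S} {X : Set S}

theorem IsSupportOrdering.subset_apply (hf : Monotone f) {r : S → S → Prop}
    (h : IsSupportOrdering f X r) : X ⊆ f X :=
  fun x hx => hf (fun _ hz => hz.1) (h x hx)

theorem isSupportOrdering_of_subset_apply (h : X ⊆ f X) :
    IsSupportOrdering f X (fun x y => x ∈ X ∧ y ∈ X) := by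
  intro x hx
  have hX : {x' ∈ X | x' ∈ X ∧ x ∈ X} = X := by
    ext z
    simp only [Set.mem_ofPred_eq, hx, and_true, and_self]
  rw [hX]
  exact h hx

theorem exists_isSupportOrdering_iff_subset_apply (hf : Monotone f) :
    (∃ r : S → S → Prop, (∀ x y, r x y → x ∈ X ∧ y ∈ X) ∧ IsSupportOrdering f X r) ↔
      X ⊆ f X :=
  ⟨fun ⟨_, _, h⟩ => h.subset_apply hf,
    fun h => ⟨_, fun _ _ hxy => hxy, isSupportOrdering_of_subset_apply h⟩⟩

end SupportOrdering

theorem gfp_eq_union_supported {S : Type*} (f : Set S → Set S) (hf : Monotone f) :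
    OrderHom.gfp ⟨f, hf⟩ =
      sSup {X : Set S |
        ∃ r : S → S → Prop, (∀ x y, r x y → x ∈ X ∧ y ∈ X) ∧ IsSupportOrdering f X r} := by
  show sSup {X | X ⊆ f X} = _
  congr 1
  ext X
  exact (exists_isSupportOrdering_iff_subset_apply hf).symm
end

section
/- Let S be a set, f : Set S → Set S monotone, and let 𝒲 be a family of subsets of S each of which is well-supported for f (i.e. each W ∈ 𝒲 admits a well-founded support ordering). Then ⋃𝒲 is well-supported for f. -/
/-- `X` is well-supported for `f`: it admits a well-founded support ordering. -/
def IsWellSupported {S : Type*} (f : Set S → Set S) (X : Set S) : Prop :=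
  ∃ r : S → S → Prop,
    (∀ x y, r x y → x ∈ X ∧ y ∈ X) ∧ WellFounded r ∧ IsSupportOrdering f X r

/-!
Well-order the family. Send each point of the union to the first layer that contains it, and
compare two points first by their layers and then, inside a common layer, by that layer's own
well-founded support ordering. This lexicographic relation is well founded, and a point's
supporting predecessors in its first layer all lie in layers that are not later, so they remain
predecessors in the combined relation; monotonicity of `f` then transfers the support.
-/

section Layers

variable {ι S : Type*} {lt : ι → ι → Prop}

def LayeredRel (lt : ι → ι → Prop) (idx : S → ι) (r : ι → S → S → Prop) (x y : S) :
    Prop :=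
  lt (idx x) (idx y) ∨ idx x = idx y ∧ r (idx y) x y

theorem wellFounded_layeredRel (hlt : WellFounded lt) (idx : S → ι)
    {r : ι → S → S → Prop} (hr : ∀ i, WellFounded (r i)) :
    WellFounded (LayeredRel lt idx r) := by
  refine Subrelation.wf (r := InvImage (PSigma.Lex lt r) fun x => ⟨idx x, x⟩) ?_
    (InvImage.wf _ (hlt.psigma_lex hr))
  rintro x y (hxy | ⟨hidx, hxy⟩)
  · exact PSigma.Lex.left _ _ hxy
  · change PSigma.Lex lt r ⟨idx x, x⟩ ⟨idx y, y⟩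
    rw [hidx]
    exact PSigma.Lex.right _ hxy

open Classical in
/-- An `lt`-minimal index `i` with `x ∈ A i`; junk (an arbitrary index) if there is none. -/
noncomputable def firstLayer [Nonempty ι] (hlt : WellFounded lt) (A : ι → Set S) (x : S) : ι :=
  if h : ∃ i, x ∈ A i then hlt.min {i | x ∈ A i} h else Classical.arbitrary ι

variable [Nonempty ι] (hlt : WellFounded lt) {A : ι → Set S} {x : S}

theorem mem_firstLayer (hx : x ∈ ⋃ i, A i) : x ∈ A (firstLayer hlt A x) := by
  rw [Set.mem_iUnion] at hx
  rw [firstLayer, dif_pos hx]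
  exact hlt.prop_min hx

theorem not_lt_firstLayer {i : ι} (hx : x ∈ A i) : ¬ lt i (firstLayer hlt A x) := by
  rw [firstLayer, dif_pos ⟨i, hx⟩]
  exact hlt.not_lt_min {i | x ∈ A i} hx

end Layers

theorem isWellSupported_empty {S : Type*} (f : Set S → Set S) : IsWellSupported f ∅ :=
  ⟨fun _ _ => False, fun _ _ => False.elim, ⟨fun x => ⟨x, fun _ => False.elim⟩⟩,
    fun _ => False.elim⟩

theorem IsWellSupported.iUnion_of_isWellOrder {ι S : Type*} (lt : ι → ι → Prop)
    [IsWellOrder ι lt] [Nonempty ι] {f : Set S → Set S} (hf : Monotone f) {A : ι → Set S}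
    (hA : ∀ i, IsWellSupported f (A i)) : IsWellSupported f (⋃ i, A i) := by
  choose r _ hwf hsupp using hA
  have hlt : WellFounded lt := IsWellFounded.wf
  set U := ⋃ i, A i
  set idx := firstLayer hlt A
  refine ⟨fun x y => x ∈ U ∧ y ∈ U ∧ LayeredRel lt idx r x y, fun _ _ h => ⟨h.1, h.2.1⟩,
    Subrelation.wf (fun h => h.2.2) (wellFounded_layeredRel hlt idx hwf), ?_⟩
  intro x hx
  have hpred : {x' ∈ A (idx x) | r (idx x) x' x} ⊆
      {x' ∈ U | x' ∈ U ∧ x ∈ U ∧ LayeredRel lt idx r x' x} := by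
    rintro x' ⟨hx'A, hx'x⟩
    have hx'U : x' ∈ U := Set.mem_iUnion.2 ⟨_, hx'A⟩
    refine ⟨hx'U, hx'U, hx, ?_⟩
    rcases trichotomous_of lt (idx x') (idx x) with hbefore | heq | hafter
    · exact Or.inl hbefore
    · exact Or.inr ⟨heq, hx'x⟩
    · exact absurd hafter (not_lt_firstLayer hlt hx'A)
  exact hf hpred (hsupp _ x (mem_firstLayer hlt hx))

theorem IsWellSupported.iUnion {ι S : Type*} {f : Set S → Set S} (hf : Monotone f)
    {A : ι → Set S} (hA : ∀ i, IsWellSupported f (A i)) : IsWellSupported f (⋃ i, A i) := by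
  rcases isEmpty_or_nonempty ι with _ | _
  · simpa using isWellSupported_empty f
  · exact IsWellSupported.iUnion_of_isWellOrder WellOrderingRel hf hA

theorem sUnion_wellSupported {S : Type*} (f : Set S → Set S) (hf : Monotone f)
    (W : Set (Set S)) (hW : ∀ A ∈ W, IsWellSupported f A) :
    IsWellSupported f (⋃₀ W) := by
  rw [Set.sUnion_eq_iUnion]
  exact IsWellSupported.iUnion hf fun A => hW A A.2
end

section
/- Let S be a set, f : Set S → Set S monotone, and let 𝒳 = {X ⊆ S | X is well-supported for f}. Then f(⋃𝒳) = ⋃𝒳; that is, the union of all well-supported sets is a fixpoint of f. -/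
open Set

section

variable {S : Type*} {f : Set S → Set S}

def supportRanks (f : Set S → Set S) (𝒳 : Set (Set S)) (x : S) : Set Ordinal :=
  {o | ∃ X ∈ 𝒳, ∃ r : S → S → Prop, ∃ hwf : WellFounded r,
    IsSupportOrdering f X r ∧ x ∈ X ∧ (hwf.apply x).rank = o}

noncomputable def supportRank (f : Set S → Set S) (𝒳 : Set (Set S)) (x : S) : Ordinal :=
  sInf (supportRanks f 𝒳 x)

theorem supportRank_le {𝒳 : Set (Set S)} {X : Set S} (hX : X ∈ 𝒳) {r : S → S → Prop}
    (hwf : WellFounded r) (hso : IsSupportOrdering f X r) {x : S} (hx : x ∈ X) :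
    supportRank f 𝒳 x ≤ (hwf.apply x).rank :=
  csInf_le' ⟨X, hX, r, hwf, hso, hx, rfl⟩

theorem exists_rank_eq_supportRank {𝒳 : Set (Set S)} (h𝒳 : ∀ X ∈ 𝒳, IsWellSupported f X)
    {x : S} (hx : x ∈ ⋃₀ 𝒳) :
    ∃ X ∈ 𝒳, ∃ r : S → S → Prop, ∃ hwf : WellFounded r,
      IsSupportOrdering f X r ∧ x ∈ X ∧ (hwf.apply x).rank = supportRank f 𝒳 x := by
  obtain ⟨X, hX, hxX⟩ := hx
  obtain ⟨r, -, hwf, hso⟩ := h𝒳 X hX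
  exact csInf_mem (s := supportRanks f 𝒳 x) ⟨_, X, hX, r, hwf, hso, hxX, rfl⟩

theorem IsWellSupported.subset_apply (hf : Monotone f) {X : Set S} (hX : IsWellSupported f X) :
    X ⊆ f X := by
  obtain ⟨r, -, -, hso⟩ := hX
  exact fun x hx => hf (sep_subset X _) (hso x hx)

theorem IsWellSupported.sUnion (hf : Monotone f) {𝒳 : Set (Set S)}
    (h𝒳 : ∀ X ∈ 𝒳, IsWellSupported f X) : IsWellSupported f (⋃₀ 𝒳) := by
  set ρ := supportRank f 𝒳
  refine ⟨fun a b => a ∈ ⋃₀ 𝒳 ∧ b ∈ ⋃₀ 𝒳 ∧ ρ a < ρ b, fun a b h => ⟨h.1, h.2.1⟩,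
    Subrelation.wf (fun h => h.2.2) (InvImage.wf ρ Ordinal.lt_wf), fun x hx => ?_⟩
  obtain ⟨X, hX, r, hwf, hso, hxX, hrank⟩ := exists_rank_eq_supportRank h𝒳 hx
  refine hf ?_ (hso x hxX)
  rintro y ⟨hyX, hyx⟩
  have hyU : y ∈ ⋃₀ 𝒳 := ⟨X, hX, hyX⟩
  have hρ : ρ y < ρ x :=
    calc ρ y ≤ (hwf.apply y).rank := supportRank_le hX hwf hso hyX
      _ < (hwf.apply x).rank := Acc.rank_lt_of_rel _ hyx
      _ = ρ x := hrank
  exact ⟨hyU, hyU, hx, hρ⟩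

theorem IsWellSupported.insert (hf : Monotone f) {X : Set S} (hX : IsWellSupported f X) {x : S}
    (hx : x ∈ f X) : IsWellSupported f (insert x X) := by
  classical
  by_cases hxX : x ∈ X
  · rwa [insert_eq_of_mem hxX]
  obtain ⟨r, hdom, hwf, hso⟩ := hX
  have hne : ∀ a ∈ X, a ≠ x := fun a ha hax => hxX (hax ▸ ha)
  refine ⟨fun a b => r a b ∨ (a ∈ X ∧ b = x), ?_, ?_, ?_⟩
  · rintro a b (hab | ⟨ha, rfl⟩)
    · exact ⟨mem_insert_of_mem x (hdom a b hab).1, mem_insert_of_mem x (hdom a b hab).2⟩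
    · exact ⟨mem_insert_of_mem b ha, mem_insert b X⟩
  · -- `x` is the top of the lexicographic order on `(a = x, a)`
    refine Subrelation.wf (r := InvImage (Prod.Lex (· < ·) r) fun a => (decide (a = x), a))
      ?_ (InvImage.wf _ (wellFounded_lt.prod_lex hwf))
    rintro a b (hab | ⟨ha, rfl⟩)
    · have ha := hne a (hdom a b hab).1
      have hb := hne b (hdom a b hab).2
      simp only [InvImage, ha, hb, decide_false]
      exact Prod.Lex.right _ hab
    · simp only [InvImage, hne a ha, decide_false, decide_true]
      exact Prod.Lex.left _ _ Bool.false_lt_true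
  · rintro y (rfl | hyX)
    · refine hf (fun a ha => ?_) hx
      exact ⟨mem_insert_of_mem y ha, Or.inr ⟨ha, rfl⟩⟩
    · refine hf (fun a ha => ?_) (hso y hyX)
      exact ⟨mem_insert_of_mem x ha.1, Or.inl ha.2⟩

end

theorem union_wellSupported_fixpoint {S : Type*} (f : Set S → Set S) (hf : Monotone f) :
    f (⋃₀ {X : Set S | IsWellSupported f X}) = ⋃₀ {X : Set S | IsWellSupported f X} := by
  set U := ⋃₀ {X : Set S | IsWellSupported f X}
  have hU : IsWellSupported f U := IsWellSupported.sUnion hf fun _ hX => hX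
  refine Subset.antisymm (fun x hx => ?_) (hU.subset_apply hf)
  exact mem_sUnion_of_mem (mem_insert x U) (hU.insert hf hx)
end

section
/- Let S be a set, f : Set S → Set S monotone, and 𝒳 a family of support orderings for f. Then the pair (⋃_{(X,≺)∈𝒳} X, ⋃_{(X,≺)∈𝒳} ≺) is a support ordering for f. -/
theorem IsSupportOrdering.mem_of_le {S : Type*} {f : Set S → Set S} (hf : Monotone f)
    {X Y : Set S} {r r' : S → S → Prop} (h : IsSupportOrdering f X r) (hXY : X ⊆ Y)
    (hrr' : ∀ a b, r a b → r' a b) {x : S} (hx : x ∈ X) : x ∈ f {x' ∈ Y | r' x' x} := by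
  refine hf ?_ (h x hx)
  rintro y ⟨hy, hr⟩
  exact ⟨hXY hy, hrr' y x hr⟩

theorem union_of_supportOrderings_general {S : Type*} {ι : Type*} (f : Set S → Set S) (hf : Monotone f)
    (X : ι → Set S) (r : ι → S → S → Prop)
    (hsupp : ∀ i, IsSupportOrdering f (X i) (r i)) :
    IsSupportOrdering f (⋃ i, X i) (fun x y => ∃ i, r i x y) := by
  intro x hx
  obtain ⟨i, hi⟩ := Set.mem_iUnion.mp hx
  exact (hsupp i).mem_of_le hf (Set.subset_iUnion X i) (r' := fun x y => ∃ i, r i x y)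
    (fun _ _ h => ⟨i, h⟩) hi

theorem union_of_supportOrderings {S : Type*} {ι : Type*} (f : Set S → Set S) (hf : Monotone f)
    (X : ι → Set S) (r : ι → S → S → Prop)
    (hrX : ∀ i, ∀ x y, r i x y → x ∈ X i ∧ y ∈ X i)
    (hsupp : ∀ i, IsSupportOrdering f (X i) (r i)) :
    IsSupportOrdering f (⋃ i, X i) (fun x y => ∃ i, r i x y) :=
  union_of_supportOrderings_general f hf X r hsupp
end

section
/- Let S be a set, f : Set S → Set S monotone, and (X, ≺) a well-founded support ordering for f. Then there exists a well-ordering ≺' on X extending ≺ such that (X, ≺') is a support ordering for f. -/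
/-- `r` is a well-ordering on the subset `X`: an irreflexive, transitive relation on `X`
in which any two distinct elements of `X` are comparable, and which is well-founded. -/
def IsWellOrderingOn {S : Type*} (r : S → S → Prop) (X : Set S) : Prop :=
  (∀ x y, r x y → x ∈ X ∧ y ∈ X) ∧
  (∀ x, ¬ r x x) ∧ Transitive r ∧
  (∀ x ∈ X, ∀ y ∈ X, x ≠ y → r x y ∨ r y x) ∧
  WellFounded r

theorem IsSupportOrdering.mono {S : Type*} {f : Set S → Set S} (hf : Monotone f) {X : Set S}
    {r r' : S → S → Prop} (hrr' : ∀ x y, r x y → r' x y) (hsupp : IsSupportOrdering f X r) :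
    IsSupportOrdering f X r' := by
  intro x hx
  refine hf ?_ (hsupp x hx)
  rintro x' ⟨hx'X, hx'x⟩
  exact ⟨hx'X, hrr' x' x hx'x⟩

theorem IsWellOrder.isWellOrderingOn_restrict {S : Type*} (s : S → S → Prop) [IsWellOrder S s]
    (X : Set S) : IsWellOrderingOn (fun x y => x ∈ X ∧ y ∈ X ∧ s x y) X := by
  refine ⟨fun x y h => ⟨h.1, h.2.1⟩, fun x h => irrefl x h.2.2, ?_, ?_, ?_⟩
  · rintro x y z ⟨hx, -, hxy⟩ ⟨-, hz, hyz⟩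
    exact ⟨hx, hz, _root_.trans hxy hyz⟩
  · intro x hx y hy hne
    rcases trichotomous_of s x y with h | h | h
    · exact Or.inl ⟨hx, hy, h⟩
    · exact absurd h hne
    · exact Or.inr ⟨hy, hx, h⟩
  · exact Subrelation.wf (fun h => h.2.2) (IsWellFounded.wf (r := s))

theorem WellFounded.exists_wellOrderingOn_ge {S : Type*} {X : Set S} {r : S → S → Prop}
    (hrX : ∀ x y, r x y → x ∈ X ∧ y ∈ X) (hwf : WellFounded r) :
    ∃ r' : S → S → Prop, (∀ x y, r x y → r' x y) ∧ IsWellOrderingOn r' X := by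
  have : IsWellFounded S r := ⟨hwf⟩
  obtain ⟨s, hrs, _⟩ := IsWellFounded.exists_well_order_ge r
  refine ⟨_, fun x y h => ?_, IsWellOrder.isWellOrderingOn_restrict s X⟩
  exact ⟨(hrX x y h).1, (hrX x y h).2, hrs x y h⟩

theorem wellFounded_support_extends_to_wellOrdering {S : Type*}
    (f : Set S → Set S) (hf : Monotone f)
    (X : Set S) (r : S → S → Prop)
    (hrX : ∀ x y, r x y → x ∈ X ∧ y ∈ X)
    (hwf : WellFounded r)
    (hsupp : IsSupportOrdering f X r) :
    ∃ r' : S → S → Prop,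
      (∀ x y, r x y → r' x y) ∧ IsWellOrderingOn r' X ∧ IsSupportOrdering f X r' := by
  obtain ⟨r', hrr', hwo⟩ := hwf.exists_wellOrderingOn_ge hrX
  exact ⟨r', hrr', hwo, hsupp.mono hf hrr'⟩
end

section
/- Let S be a set and f : Set S → Set S monotone. If (X, ≺) is a support ordering for f with ≺ well-founded, and Y ⊆ S satisfies f(Y) ⊆ Y (Y is a pre-fixpoint), then X ⊆ Y. -/
theorem wellFounded_support_subset_prefixpoint {S : Type*}
    (f : Set S → Set S) (hf : Monotone f)
    (X : Set S) (r : S → S → Prop)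
    (hrX : ∀ x y, r x y → x ∈ X ∧ y ∈ X)
    (hsupp : IsSupportOrdering f X r)
    (hwf : WellFounded r)
    (Y : Set S) (hY : f Y ⊆ Y) :
    X ⊆ Y := by
  intro x hx
  induction x using hwf.induction with
  | _ x ih =>
    apply hY
    apply hf (show {x' ∈ X | r x' x} ⊆ Y from fun x' hx' => ih x' hx'.2 hx'.1)
    exact hsupp x hx
end
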